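/- Define the run length of zeros r_n(x) = max{ k ≥ 0 : there exists 0 ≤ i ≤ n−k with ε_{i+1}(x) = ⋯ = ε_{i+k}(x) = 0 }. Then for μ-almost all x ∈ [0,1), limsup_{n→∞} log r_n(x) / log n ≤ α. -/

import Mathlib

open MeasureTheory Filter Real Set

/-- The intermittent (Liverani–Saussol–Vaienti) map. -/
noncomputable def T (α : ℝ) (x : ℝ) : ℝ :=
  if x < 1/2 then x * (1 + 2 ^ α * x ^ α) else 2 * x - 1

/-- The longest run of zero digits among ε₁(x),…,εₙ(x), where εₖ(x) = 0 iff T^[k-1] x ∈ [0,1/2). -/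
noncomputable def runZero (α : ℝ) (n : ℕ) (x : ℝ) : ℕ :=
  sSup {k | ∃ i, i + k ≤ n ∧ ∀ j < k, (T α)^[i + j] x < 1/2}

/-- The longest run of one digits among ε₁(x),…,εₙ(x), where εₖ(x) = 1 iff T^[k-1] x ∈ [1/2,1). -/
noncomputable def runOne (α : ℝ) (n : ℕ) (x : ℝ) : ℕ :=
  sSup {k | ∃ i, i + k ≤ n ∧ ∀ j < k, 1/2 ≤ (T α)^[i + j] x}

/-!
On `(0, 1/2)` one step of `T α` lowers `x ^ (-α)` by at least `α 2^(α-1)` (Bernoulli's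
inequality), so a run of `k` zeros read from a point `y > 0` forces `y ≤ (k α 2^(α-1))^(-1/α)`.
Hence a `1` at time `i` followed by `k` zeros puts `T^i x` into a subinterval of `[1/2, 1)` of
length `≍ k^(-1/α)`. The density is bounded there and `μ` is invariant, so for `k = ⌈(i+1)^β⌉`
this event has measure `≍ (i+1)^(-β/α)`, summable when `β > α`, and Borel–Cantelli bounds every
late run by `n^β`. Runs starting in a fixed initial stretch are bounded independently of `n`,
because almost every orbit avoids `0`.
-/

lemma MeasureTheory.MeasurePreserving.ae_forall_iterate {X : Type*} [MeasurableSpace X]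
    {μ : Measure X} {f : X → X} (hf : MeasurePreserving f μ μ) {p : X → Prop}
    (hp : ∀ᵐ x ∂μ, p x) : ∀ᵐ x ∂μ, ∀ n, p (f^[n] x) :=
  ae_all_iff.2 fun n => (hf.iterate n).quasiMeasurePreserving.ae hp

lemma limsup_log_div_log_le {u : ℕ → ℕ} {α : ℝ} {β : ℕ → ℝ} (hβ0 : ∀ j, 0 ≤ β j)
    (hβ : Tendsto β atTop (nhds α)) (hu : ∀ j, ∀ᶠ n in atTop, (u n : ℝ) ≤ n ^ β j) :
    limsup (fun n => log (u n) / log n) atTop ≤ α := by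
  have hcobdd : IsCoboundedUnder (· ≤ ·) atTop fun n => log (u n) / log n :=
    isCoboundedUnder_le_of_le atTop fun n =>
      div_nonneg (log_natCast_nonneg _) (log_natCast_nonneg _)
  refine ge_of_tendsto' hβ fun j => limsup_le_of_le hcobdd ?_
  filter_upwards [hu j, eventually_gt_atTop 1] with n hn hn1
  have hlog : 0 < log n := log_pos (by exact_mod_cast hn1)
  rw [div_le_iff₀ hlog]
  rcases (u n).eq_zero_or_pos with h0 | hpos
  · simpa [h0] using mul_nonneg (hβ0 j) hlog.le
  · calc log (u n) ≤ log ((n : ℝ) ^ β j) := log_le_log (by exact_mod_cast hpos) hn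
      _ = β j * log n := log_rpow (by positivity) _

lemma summable_rpow_neg_ceil_rpow {α β c : ℝ} (hα0 : 0 < α) (hαβ : α < β) (hc : 0 < c) :
    Summable fun i : ℕ => (⌈((i : ℝ) + 1) ^ β⌉₊ * c) ^ (-1/α) := by
  have hβα : 1 < β / α := (one_lt_div hα0).2 hαβ
  have hp : Summable fun i : ℕ => c ^ (-1/α) * (((i : ℝ) + 1) ^ (β / α))⁻¹ := by
    refine .mul_left _ ?_
    exact_mod_cast (summable_nat_add_iff 1).2 (summable_nat_rpow_inv.2 hβα)
  refine hp.of_nonneg_of_le (fun i => by positivity) fun i => ?_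
  have hi : (0 : ℝ) < (i : ℝ) + 1 := by positivity
  calc (⌈((i : ℝ) + 1) ^ β⌉₊ * c) ^ (-1/α) ≤ (((i : ℝ) + 1) ^ β * c) ^ (-1/α) :=
        rpow_le_rpow_of_nonpos (by positivity) (by gcongr; exact Nat.le_ceil _)
          (by rw [neg_div]; exact neg_nonpos.2 (by positivity))
    _ = c ^ (-1/α) * (((i : ℝ) + 1) ^ (β / α))⁻¹ := by
        rw [mul_rpow (by positivity) hc.le, ← rpow_mul hi.le, ← rpow_neg hi.le, mul_comm]
        ring_nf

lemma T_of_lt (α : ℝ) {x : ℝ} (hx : x < 1/2) : T α x = x * (1 + 2 ^ α * x ^ α) := if_pos hx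

lemma T_of_ge (α : ℝ) {x : ℝ} (hx : 1/2 ≤ x) : T α x = 2 * x - 1 := if_neg hx.not_gt

lemma measurable_T (α : ℝ) : Measurable (T α) :=
  Measurable.ite measurableSet_Iio (by fun_prop) (by fun_prop)

lemma rpow_neg_T_add_le {α y : ℝ} (hα0 : 0 < α) (hα1 : α ≤ 1) (hy0 : 0 < y) (hy : y < 1/2) :
    T α y ^ (-α) + α * 2 ^ (α - 1) ≤ y ^ (-α) := by
  set t := 2 ^ α * y ^ α with ht
  set u := (1 + t)⁻¹ with hu
  have ht0 : 0 < t := by positivity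
  have ht1 : t ≤ 1 := by
    rw [ht, ← mul_rpow zero_le_two hy0.le]
    exact rpow_le_one (by positivity) (by linarith) hα0.le
  have hu1 : 1 - u = t * u := by rw [hu]; field_simp; ring
  have hu2 : 1 / 2 ≤ u := by rw [hu, one_div]; gcongr; linarith
  have hTy : T α y ^ (-α) = y ^ (-α) * u ^ α := by
    rw [T_of_lt α hy, mul_rpow hy0.le (by positivity), rpow_neg (x := 1 + t) (by positivity),
      inv_rpow (by positivity)]
  have hbern : u ^ α ≤ 1 + α * (u - 1) := by
    simpa using rpow_one_add_le_one_add_mul_self (s := u - 1) (by linarith) hα0.le hα1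
  have hyt : y ^ (-α) * t = 2 ^ α := by
    rw [ht, mul_left_comm, ← rpow_add hy0, neg_add_cancel, rpow_zero, mul_one]
  have h2 : (2 : ℝ) ^ (α - 1) = 2 ^ α / 2 := by rw [rpow_sub two_pos, rpow_one]
  calc T α y ^ (-α) + α * 2 ^ (α - 1)
      ≤ y ^ (-α) * (1 + α * (u - 1)) + α * (2 ^ α * u) := by
        rw [hTy, h2]
        gcongr
        nlinarith [rpow_pos_of_pos two_pos α]
    _ = y ^ (-α) := by rw [← hyt, mul_assoc, ← hu1]; ring

lemma natCast_mul_le_rpow_neg_of_run {α x : ℝ} (hα0 : 0 < α) (hα1 : α ≤ 1) (hx : 0 < x)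
    {k : ℕ} (hrun : ∀ j < k, (T α)^[j] x < 1/2) : k * (α * 2 ^ (α - 1)) ≤ x ^ (-α) := by
  induction k generalizing x with
  | zero => simpa using (rpow_pos_of_pos hx (-α)).le
  | succ k ih =>
    have hx2 : x < 1/2 := hrun 0 k.succ_pos
    have hTx : 0 < T α x := by rw [T_of_lt α hx2]; positivity
    have hrun' : ∀ j < k, (T α)^[j] (T α x) < 1/2 := fun j hj => hrun (j + 1) (by omega)
    have hrest := ih hTx hrun'
    have hstep := rpow_neg_T_add_le hα0 hα1 hx hx2
    push_cast
    linarith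

lemma le_rpow_of_run {α x : ℝ} (hα0 : 0 < α) (hα1 : α ≤ 1) (hx : 0 ≤ x) {k : ℕ} (hk : 1 ≤ k)
    (hrun : ∀ j < k, (T α)^[j] x < 1/2) : x ≤ (k * (α * 2 ^ (α - 1))) ^ (-1/α) := by
  have hkc : 0 < k * (α * 2 ^ (α - 1)) := by
    have : (0 : ℝ) < k := by exact_mod_cast hk
    positivity
  rcases hx.eq_or_lt with rfl | hx
  · exact (rpow_pos_of_pos hkc _).le
  calc x = (x ^ (-α)) ^ (-1/α) := by
        rw [← rpow_mul hx.le, show -α * (-1/α) = 1 by field_simp, rpow_one]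
    _ ≤ _ := rpow_le_rpow_of_nonpos hkc (natCast_mul_le_rpow_neg_of_run hα0 hα1 hx hrun)
        (by rw [neg_div]; exact neg_nonpos.2 (by positivity))

lemma exists_run_start_of_le_runZero {α x : ℝ} {n k : ℕ} (hk : k ≤ runZero α n x) :
    ∃ p, p + k ≤ n ∧ (∀ j < k, (T α)^[p + j] x < 1/2) ∧ (p = 0 ∨ 1/2 ≤ (T α)^[p - 1] x) := by
  have hex : ∃ p, p + k ≤ n ∧ ∀ j < k, (T α)^[p + j] x < 1/2 := by
    obtain ⟨p, hp, hrun⟩ :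
        runZero α n x ∈ {k | ∃ i, i + k ≤ n ∧ ∀ j < k, (T α)^[i + j] x < 1/2} :=
      Nat.sSup_mem ⟨0, 0, by simp⟩ ⟨n, fun m ⟨i, hi, _⟩ => by omega⟩
    exact ⟨p, by omega, fun j hj => hrun j (by omega)⟩
  classical
  obtain ⟨hpn, hrun⟩ := Nat.find_spec hex
  refine ⟨Nat.find hex, hpn, hrun, ?_⟩
  rcases Nat.eq_zero_or_pos (Nat.find hex) with h0 | hpos
  · exact Or.inl h0
  -- a zero just before the leftmost run would start an earlier run
  refine Or.inr (not_lt.1 fun hlt => Nat.find_min hex (m := Nat.find hex - 1) (by omega)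
    ⟨by omega, fun j hj => ?_⟩)
  rcases j with _ | j
  · simpa using hlt
  · rw [show Nat.find hex - 1 + (j + 1) = Nat.find hex + j by omega]
    exact hrun j (by omega)

def oneThenZeros (α : ℝ) (k : ℕ) : Set ℝ := {y | 1/2 ≤ y ∧ ∀ j < k, (T α)^[j + 1] y < 1/2}

lemma measurableSet_oneThenZeros (α : ℝ) (k : ℕ) : MeasurableSet (oneThenZeros α k) := by
  have hT := measurable_T α
  unfold oneThenZeros
  measurability

lemma oneThenZeros_subset_Icc {α : ℝ} (hα0 : 0 < α) (hα1 : α ≤ 1) {k : ℕ} (hk : 1 ≤ k) :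
    oneThenZeros α k ∩ Ico 0 1 ⊆ Icc (1/2) (1/2 + (k * (α * 2 ^ (α - 1))) ^ (-1/α) / 2) := by
  rintro y ⟨⟨hy, hrun⟩, -⟩
  have hTy := T_of_ge α hy
  have := le_rpow_of_run hα0 hα1 (x := T α y) (by linarith) hk fun j hj => by
    simpa only [Function.iterate_succ_apply] using hrun j hj
  exact ⟨hy, by linarith⟩

lemma measure_oneThenZeros_le {α M : ℝ} {μ : Measure ℝ} {h : ℝ → ℝ}
    (hμ : μ = (volume.restrict (Ico 0 1)).withDensity (fun x => ENNReal.ofReal (h x)))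
    (hM : ∀ x ∈ Ico (1/2 : ℝ) 1, h x ≤ M) (hα0 : 0 < α) (hα1 : α ≤ 1) {k : ℕ} (hk : 1 ≤ k) :
    μ (oneThenZeros α k) ≤
      ENNReal.ofReal M * ENNReal.ofReal ((k * (α * 2 ^ (α - 1))) ^ (-1/α) / 2) := by
  have hB := measurableSet_oneThenZeros α k
  rw [hμ, withDensity_apply _ hB, Measure.restrict_restrict hB]
  calc ∫⁻ x in oneThenZeros α k ∩ Ico 0 1, ENNReal.ofReal (h x)
      ≤ ∫⁻ _ in oneThenZeros α k ∩ Ico 0 1, ENNReal.ofReal M :=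
        setLIntegral_mono' (hB.inter measurableSet_Ico) fun x hx =>
          ENNReal.ofReal_le_ofReal (hM x ⟨hx.1.1, hx.2.2⟩)
    _ = ENNReal.ofReal M * volume (oneThenZeros α k ∩ Ico 0 1) := setLIntegral_const _ _
    _ ≤ ENNReal.ofReal M *
          volume (Icc (1/2 : ℝ) (1/2 + (k * (α * 2 ^ (α - 1))) ^ (-1/α) / 2)) :=
        by gcongr; exact oneThenZeros_subset_Icc hα0 hα1 hk
    _ = _ := by rw [volume_Icc, add_sub_cancel_left]

lemma ae_eventually_iterate_notMem_oneThenZeros {α β M : ℝ} {μ : Measure ℝ} {h : ℝ → ℝ}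
    (hμ : μ = (volume.restrict (Ico 0 1)).withDensity (fun x => ENNReal.ofReal (h x)))
    (hM : ∀ x ∈ Ico (1/2 : ℝ) 1, h x ≤ M) (hinv : MeasurePreserving (T α) μ μ)
    (hα0 : 0 < α) (hα1 : α ≤ 1) (hαβ : α < β) :
    ∀ᵐ x ∂μ, ∀ᶠ i : ℕ in atTop, (T α)^[i] x ∉ oneThenZeros α ⌈((i : ℝ) + 1) ^ β⌉₊ := by
  set k : ℕ → ℕ := fun i => ⌈((i : ℝ) + 1) ^ β⌉₊
  have hk : ∀ i, 1 ≤ k i := fun i => Nat.one_le_iff_ne_zero.2 (Nat.ceil_pos.2 (by positivity)).ne'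
  set a : ℕ → ℝ := fun i => (k i * (α * 2 ^ (α - 1))) ^ (-1/α) / 2
  have ha : Summable a := (summable_rpow_neg_ceil_rpow hα0 hαβ (by positivity)).div_const 2
  refine ae_eventually_notMem (s := fun i => (T α)^[i] ⁻¹' oneThenZeros α (k i)) ?_
  refine ne_top_of_le_ne_top (b := ∑' i, ENNReal.ofReal M * ENNReal.ofReal (a i)) ?_ ?_
  · rw [ENNReal.tsum_mul_left, ← ENNReal.ofReal_tsum_of_nonneg (fun i => by positivity) ha]
    exact ENNReal.mul_ne_top ENNReal.ofReal_ne_top ENNReal.ofReal_ne_top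
  · refine ENNReal.tsum_le_tsum fun i => ?_
    rw [(hinv.iterate i).measure_preimage (measurableSet_oneThenZeros α _).nullMeasurableSet]
    exact measure_oneThenZeros_le hμ hM hα0 hα1 (hk i)

lemma runZero_le_max_of_forall_ge {α β x : ℝ} (hα0 : 0 < α) (hα1 : α ≤ 1) (hβ : 0 ≤ β)
    (hpos : ∀ j, 0 < (T α)^[j] x) {i₀ : ℕ}
    (hi₀ : ∀ i ≥ i₀, (T α)^[i] x ∉ oneThenZeros α ⌈((i : ℝ) + 1) ^ β⌉₊) (n : ℕ) :
    (runZero α n x : ℝ) ≤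
      max ((∑ p ∈ Finset.range (i₀ + 1), ((T α)^[p] x) ^ (-α)) / (α * 2 ^ (α - 1))) (n ^ β) := by
  obtain ⟨p, hpn, hrun, hstart⟩ := exists_run_start_of_le_runZero (le_refl (runZero α n x))
  set k := runZero α n x
  by_cases hp : p ≤ i₀
  · refine le_max_of_le_left ((le_div_iff₀ (by positivity)).2 ?_)
    calc (k : ℝ) * (α * 2 ^ (α - 1)) ≤ ((T α)^[p] x) ^ (-α) :=
          natCast_mul_le_rpow_neg_of_run hα0 hα1 (hpos p) fun j hj => by
            simpa only [← Function.iterate_add_apply, add_comm] using hrun j hj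
      _ ≤ _ := Finset.single_le_sum (f := fun p => ((T α)^[p] x) ^ (-α))
          (fun j _ => (rpow_pos_of_pos (hpos j) _).le) (Finset.mem_range.2 (by omega))
  · refine le_max_of_le_right ?_
    have hone : 1/2 ≤ (T α)^[p - 1] x := hstart.resolve_left (by omega)
    have hnot := hi₀ (p - 1) (by omega)
    rw [Nat.cast_sub (by omega), Nat.cast_one, sub_add_cancel] at hnot
    have hk : k < ⌈(p : ℝ) ^ β⌉₊ := by
      by_contra! hle
      refine hnot ⟨hone, fun j hj => ?_⟩
      rw [← Function.iterate_add_apply, show j + 1 + (p - 1) = p + j by omega]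
      exact hrun j (by omega)
    calc (k : ℝ) ≤ (p : ℝ) ^ β := (Nat.lt_ceil.1 hk).le
      _ ≤ (n : ℝ) ^ β := by gcongr; exact_mod_cast (show p ≤ n by omega)

lemma ae_eventually_runZero_le_rpow {α β M : ℝ} {μ : Measure ℝ} {h : ℝ → ℝ}
    (hμ : μ = (volume.restrict (Ico 0 1)).withDensity (fun x => ENNReal.ofReal (h x)))
    (hM : ∀ x ∈ Ico (1/2 : ℝ) 1, h x ≤ M) (hinv : MeasurePreserving (T α) μ μ)
    (hα0 : 0 < α) (hα1 : α ≤ 1) (hαβ : α < β) :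
    ∀ᵐ x ∂μ, ∀ᶠ n : ℕ in atTop, (runZero α n x : ℝ) ≤ n ^ β := by
  have hpos : ∀ᵐ x ∂μ, 0 < x := by
    have : ∀ᵐ x ∂volume.restrict (Ico (0 : ℝ) 1), x ∈ Ioo 0 1 := by
      rw [← Measure.restrict_congr_set Ioo_ae_eq_Ico]
      exact ae_restrict_mem measurableSet_Ioo
    rw [hμ]
    exact (withDensity_absolutelyContinuous _ _).ae_le (this.mono fun x hx => hx.1)
  filter_upwards [hinv.ae_forall_iterate hpos,
    ae_eventually_iterate_notMem_oneThenZeros hμ hM hinv hα0 hα1 hαβ] with x hx hev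
  obtain ⟨i₀, hi₀⟩ := eventually_atTop.1 hev
  have hβ : 0 < β := hα0.trans hαβ
  filter_upwards [((tendsto_rpow_atTop hβ).comp tendsto_natCast_atTop_atTop).eventually_ge_atTop
    ((∑ p ∈ Finset.range (i₀ + 1), ((T α)^[p] x) ^ (-α)) / (α * 2 ^ (α - 1)))] with n hn
  exact (runZero_le_max_of_forall_ge hα0 hα1 hβ.le hx hi₀ n).trans (max_le hn le_rfl)

theorem stmt8_general (α : ℝ) (hα0 : 0 < α) (hα1 : α < 1)
    (μ : Measure ℝ)
    (hinv : MeasurePreserving (T α) μ μ)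
    (h : ℝ → ℝ)
    (hμ : μ = (volume.restrict (Set.Ico 0 1)).withDensity (fun x => ENNReal.ofReal (h x)))
    (hbd : ∀ b ∈ Set.Ioo (0:ℝ) 1, ∃ m M : ℝ, 0 < m ∧
      ∀ x ∈ Set.Ico b (1:ℝ), m ≤ h x ∧ h x ≤ M) :
    ∀ᵐ x ∂μ, Filter.limsup
      (fun n : ℕ => Real.log (runZero α n x) / Real.log n) atTop ≤ α := by
  obtain ⟨_, M, -, hmM⟩ := hbd (1/2) ⟨by norm_num, by norm_num⟩
  have hrun : ∀ j : ℕ, ∀ᵐ x ∂μ, ∀ᶠ n : ℕ in atTop,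
      (runZero α n x : ℝ) ≤ n ^ (α + 1 / ((j : ℝ) + 1)) := fun j =>
    ae_eventually_runZero_le_rpow hμ (fun x hx => (hmM x hx).2) hinv hα0 hα1.le
      (lt_add_of_pos_right α (by positivity))
  filter_upwards [ae_all_iff.2 hrun] with x hx
  refine limsup_log_div_log_le (fun j => by positivity) ?_ hx
  simpa using tendsto_one_div_add_atTop_nhds_zero_nat.const_add α

theorem stmt8 (α : ℝ) (hα0 : 0 < α) (hα1 : α < 1) (c : ℝ) (hc : 0 < c)
    (μ : Measure ℝ) [IsProbabilityMeasure μ]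
    (hinv : MeasurePreserving (T α) μ μ) (hac : μ ≪ volume)
    (h : ℝ → ℝ)
    (hμ : μ = (volume.restrict (Set.Ico 0 1)).withDensity (fun x => ENNReal.ofReal (h x)))
    (hlim : Tendsto (fun x => x ^ α * h x) (nhdsWithin 0 (Set.Ioi 0)) (nhds c))
    (hbd : ∀ b ∈ Set.Ioo (0:ℝ) 1, ∃ m M : ℝ, 0 < m ∧
      ∀ x ∈ Set.Ico b (1:ℝ), m ≤ h x ∧ h x ≤ M) :
    ∀ᵐ x ∂μ, Filter.limsup
      (fun n : ℕ => Real.log (runZero α n x) / Real.log n) atTop ≤ α :=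
  stmt8_general α hα0 hα1 μ hinv h hμ hbd
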